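/- arXiv:2001.10664 — 11 statements merged into one kernel-verified Lean document; each statement's English description precedes it below -/
import Mathlib

section
/- Let n, z > 0 and define for each real m ≥ n: W₂(m) = (n/m)²·d² + (σ/√(n+z) - σ/√m)² where d is a fixed real number and σ > 0. Then any minimizer m* of W₂ over m ≥ n satisfies m* ≥ n + z. -/
open Real

/-- Any minimizer over `[n, ∞)` of
`W₂(m) = (n/m)² d² + (σ/√(n+z) - σ/√m)²` satisfies `m* ≥ n + z`. -/
theorem stmt_3 (n z σ d : ℝ) (hn : 0 < n) (hz : 0 < z) (hσ : 0 < σ)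
    (W : ℝ → ℝ)
    (hW : ∀ m, W m = (n / m) ^ 2 * d ^ 2 + (σ / Real.sqrt (n + z) - σ / Real.sqrt m) ^ 2)
    (mstar : ℝ) (hmstar : n ≤ mstar)
    (hmin : ∀ m, n ≤ m → W mstar ≤ W m) :
    n + z ≤ mstar := by
  by_contra h
  push_neg at h
  have hm0 : 0 < mstar := lt_of_lt_of_le hn hmstar
  have hnz : 0 < n + z := by linarith
  have hs1 : 0 < Real.sqrt mstar := Real.sqrt_pos.mpr hm0
  have hs2 : 0 < Real.sqrt (n + z) := Real.sqrt_pos.mpr hnz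
  have hlt : Real.sqrt mstar < Real.sqrt (n + z) := by
    exact Real.sqrt_lt_sqrt hm0.le h
  have hdiv : σ / Real.sqrt (n + z) < σ / Real.sqrt mstar :=
    div_lt_div_of_pos_left hσ hs1 hlt
  have hsq : 0 < (σ / Real.sqrt (n + z) - σ / Real.sqrt mstar) ^ 2 := by
    have : σ / Real.sqrt (n + z) - σ / Real.sqrt mstar ≠ 0 := by linarith
    positivity
  have hfirst : (n / (n + z)) ^ 2 * d ^ 2 ≤ (n / mstar) ^ 2 * d ^ 2 := by
    have h1 : n / (n + z) ≤ n / mstar := by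
      apply div_le_div_of_nonneg_left hn.le hm0 (by linarith)
    have h2 : 0 ≤ n / (n + z) := by positivity
    exact mul_le_mul_of_nonneg_right (pow_le_pow_left₀ h2 h1 2) (sq_nonneg d)
  have hmin' := hmin (n + z) (by linarith)
  rw [hW mstar, hW (n + z)] at hmin'
  have : σ / Real.sqrt (n + z) - σ / Real.sqrt (n + z) = 0 := by ring
  rw [this] at hmin'
  simp at hmin'
  linarith
end

section
/- With n, z, σ > 0 and d ∈ ℝ, define W₂(m) = (n/m)²d² + (σ/√m - σ/√(n+z))² and W̃₂(m) = d² + (σ/√n - σ/√(m+z))². Then for all m > n, W̃₂(m) > W₂(m). -/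
open Real

lemma aux_div_sqrt_lt (σ a b : ℝ) (hσ : 0 < σ) (ha : 0 < a) (hab : a < b) :
    σ / Real.sqrt b < σ / Real.sqrt a := by
  have h1 : 0 < Real.sqrt a := Real.sqrt_pos.mpr ha
  have h2 : Real.sqrt a < Real.sqrt b := Real.sqrt_lt_sqrt ha.le hab
  exact div_lt_div_of_pos_left hσ h1 h2

/-- With `W₂(m) = (n/m)² d² + (σ/√m - σ/√(n+z))²` and
`W̃₂(m) = d² + (σ/√n - σ/√(m+z))²`, for all `m > n` we have `W̃₂(m) > W₂(m)`. -/
theorem stmt_4 (n z σ d : ℝ) (hn : 0 < n) (hz : 0 < z) (hσ : 0 < σ)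
    (W Wt : ℝ → ℝ)
    (hW : ∀ m, W m = (n / m) ^ 2 * d ^ 2 + (σ / Real.sqrt m - σ / Real.sqrt (n + z)) ^ 2)
    (hWt : ∀ m, Wt m = d ^ 2 + (σ / Real.sqrt n - σ / Real.sqrt (m + z)) ^ 2) :
    ∀ m, n < m → W m < Wt m := by
  intro m hm
  have hm0 : 0 < m := hn.trans hm
  rw [hW, hWt]
  set p := σ / Real.sqrt n with hp
  set q := σ / Real.sqrt m with hq
  set r := σ / Real.sqrt (n + z) with hr
  set s := σ / Real.sqrt (m + z) with hs
  have hqp : q < p := aux_div_sqrt_lt σ n m hσ hn hm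
  have hsr : s < r := aux_div_sqrt_lt σ (n + z) (m + z) hσ (by linarith) (by linarith)
  have hsq : s < q := aux_div_sqrt_lt σ m (m + z) hσ hm0 (by linarith)
  have hrp : r < p := aux_div_sqrt_lt σ n (n + z) hσ hn (by linarith)
  have hsp : s < p := hsq.trans hqp
  have hsq' : (q - r) ^ 2 < (p - s) ^ 2 := by
    apply sq_lt_sq' <;> nlinarith
  have hd : (n / m) ^ 2 * d ^ 2 ≤ d ^ 2 := by
    have h1 : (n / m) ^ 2 ≤ 1 := by
      have : n / m < 1 := (div_lt_one hm0).mpr hm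
      nlinarith [div_nonneg hn.le hm0.le]
    nlinarith [sq_nonneg d]
  linarith
end

section
/- Let n, z, σ > 0, d ∈ ℝ, and define W₂(m) = d² + (σ/√m - σ/√(n+z))² and W̃₂(m) = ((n+z)/(m+z))²d² + (σ/√n - σ/√(m+z))² for m ≥ n. Then: (i) W₂ is minimized over m ≥ n uniquely at m = n+z; (ii) if d² < (σ/√n - σ/√(n+z))², then W₂(n+z) ≤ W̃₂(m) for all m ≥ n, so the minimum over both families is attained by W₂ at m = n+z. -/
open Real

/-- bootstrap sampling, small discrepancy case:
with `W₂(m) = d² + (σ/√m - σ/√(n+z))²` and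
`W̃₂(m) = ((n+z)/(m+z))² d² + (σ/√n - σ/√(m+z))²`,
(i) `W₂` is uniquely minimized over `m ≥ n` at `m = n + z`, and
(ii) if `d² < (σ/√n - σ/√(n+z))²` then `W₂(n+z) ≤ W̃₂(m)` for all `m ≥ n`,
so the overall minimum over both families is attained by `W₂` at `m = n + z`. -/
theorem stmt_5 (n z σ d : ℝ) (hn : 0 < n) (hz : 0 < z) (hσ : 0 < σ)
    (W Wt : ℝ → ℝ)
    (hW : ∀ m, W m = d ^ 2 + (σ / Real.sqrt m - σ / Real.sqrt (n + z)) ^ 2)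
    (hWt : ∀ m, Wt m = ((n + z) / (m + z)) ^ 2 * d ^ 2
      + (σ / Real.sqrt n - σ / Real.sqrt (m + z)) ^ 2) :
    ((∀ m, n ≤ m → W (n + z) ≤ W m) ∧ (∀ m, n ≤ m → m ≠ n + z → W (n + z) < W m)) ∧
    (d ^ 2 < (σ / Real.sqrt n - σ / Real.sqrt (n + z)) ^ 2 →
      ∀ m, n ≤ m → W (n + z) ≤ Wt m) := by
  have hnz : (0:ℝ) < n + z := by linarith
  have hWnz : W (n + z) = d ^ 2 := by
    rw [hW]; ring
  refine ⟨⟨?_, ?_⟩, ?_⟩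
  · intro m hm
    rw [hWnz, hW]
    nlinarith [sq_nonneg (σ / Real.sqrt m - σ / Real.sqrt (n + z))]
  · intro m hm hne
    rw [hWnz, hW]
    have hm0 : 0 < m := lt_of_lt_of_le hn hm
    have hkey : σ / Real.sqrt m - σ / Real.sqrt (n + z) ≠ 0 := by
      intro h
      apply hne
      have hsm : 0 < Real.sqrt m := Real.sqrt_pos.2 hm0
      have hsnz : 0 < Real.sqrt (n + z) := Real.sqrt_pos.2 hnz
      have h' : σ * Real.sqrt (n + z) = σ * Real.sqrt m := by
        field_simp at h
        linarith
      have h2 : Real.sqrt m = Real.sqrt (n + z) :=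
        (mul_left_cancel₀ hσ.ne' h').symm
      nlinarith [Real.sq_sqrt hm0.le, Real.sq_sqrt hnz.le]
    nlinarith [sq_pos_of_ne_zero hkey]
  · intro hd m hm
    rw [hWnz, hWt]
    have hmz : (0:ℝ) < m + z := by linarith
    have hsn : 0 < Real.sqrt n := Real.sqrt_pos.2 hn
    have hsnz : 0 < Real.sqrt (n + z) := Real.sqrt_pos.2 hnz
    have hsmz : 0 < Real.sqrt (m + z) := Real.sqrt_pos.2 hmz
    have hab : σ / Real.sqrt (n + z) < σ / Real.sqrt n := by
      apply div_lt_div_of_pos_left hσ hsn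
      exact Real.sqrt_lt_sqrt hn.le (by linarith)
    have hcb : σ / Real.sqrt (m + z) ≤ σ / Real.sqrt (n + z) := by
      apply div_le_div_of_nonneg_left hσ.le hsnz
      exact Real.sqrt_le_sqrt (by linarith)
    have hq : 0 ≤ ((n + z) / (m + z)) ^ 2 * d ^ 2 := by positivity
    nlinarith [mul_nonneg (sub_nonneg.2 hcb)
      (by linarith : (0:ℝ) ≤ 2 * (σ / Real.sqrt n) - σ / Real.sqrt (n + z) - σ / Real.sqrt (m + z))]
end

section
/- Let n, z, σ > 0, d ∈ ℝ with d² > σ²/n, and define W₂(m) = d² + (σ/√m - σ/√(n+z))² and W̃₂(m) = ((n+z)/(m+z))²d² + (σ/√n - σ/√(m+z))² for integer m ≥ n. Then inf_{m≥n} W̃₂(m) < min_{m≥n} W₂(m); that is, there exists m > n with W̃₂(m) < W₂(m') for all m' ≥ n. -/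
open Real

/-- bootstrap sampling, large discrepancy case: if `d² > σ²/n` then
there exists an integer `m > n` with `W̃₂(m) < W₂(m')` for all `m' ≥ n`, i.e.
`inf W̃₂ < min W₂`. -/
theorem stmt_6 (n z σ d : ℝ) (hn : 0 < n) (hz : 0 < z) (hσ : 0 < σ)
    (hd : d ^ 2 > σ ^ 2 / n)
    (W Wt : ℝ → ℝ)
    (hW : ∀ m, W m = d ^ 2 + (σ / Real.sqrt m - σ / Real.sqrt (n + z)) ^ 2)
    (hWt : ∀ m, Wt m = ((n + z) / (m + z)) ^ 2 * d ^ 2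
      + (σ / Real.sqrt n - σ / Real.sqrt (m + z)) ^ 2) :
    ∃ m : ℕ, n < (m : ℝ) ∧ ∀ m' : ℝ, n ≤ m' → Wt (m : ℝ) < W m' := by
  have hε : 0 < d ^ 2 - σ ^ 2 / n := by linarith
  obtain ⟨m, hm⟩ := exists_nat_gt (max n ((n + z) * d ^ 2 / (d ^ 2 - σ ^ 2 / n)))
  have hm1 : n < (m : ℝ) := lt_of_le_of_lt (le_max_left _ _) hm
  have hm2 : (n + z) * d ^ 2 / (d ^ 2 - σ ^ 2 / n) < (m : ℝ) :=
    lt_of_le_of_lt (le_max_right _ _) hm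
  refine ⟨m, hm1, fun m' hm' => ?_⟩
  have hmz : (0 : ℝ) < (m : ℝ) + z := by linarith
  have hnz : (0 : ℝ) < n + z := by linarith
  have hWd : d ^ 2 ≤ W m' := by
    rw [hW]
    nlinarith [sq_nonneg (σ / Real.sqrt m' - σ / Real.sqrt (n + z))]
  have key : Wt (m : ℝ) < d ^ 2 := by
    rw [hWt]
    have hr1 : 0 < (n + z) / ((m : ℝ) + z) := div_pos hnz hmz
    have hr2 : (n + z) / ((m : ℝ) + z) ≤ 1 := (div_le_one hmz).mpr (by linarith)
    have hmul : (n + z) * d ^ 2 < (m : ℝ) * (d ^ 2 - σ ^ 2 / n) :=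
      (div_lt_iff₀ hε).mp hm2
    have hrd : (n + z) / ((m : ℝ) + z) * d ^ 2 < d ^ 2 - σ ^ 2 / n := by
      rw [div_mul_eq_mul_div, div_lt_iff₀ hmz]
      nlinarith
    have ht1 : ((n + z) / ((m : ℝ) + z)) ^ 2 * d ^ 2 < d ^ 2 - σ ^ 2 / n := by
      have h1 : ((n + z) / ((m : ℝ) + z)) ^ 2 * d ^ 2
          ≤ (n + z) / ((m : ℝ) + z) * d ^ 2 :=
        mul_le_mul_of_nonneg_right (by nlinarith) (sq_nonneg d)
      linarith
    have hsn : (0 : ℝ) < Real.sqrt n := Real.sqrt_pos.mpr hn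
    have hsmz : (0 : ℝ) < Real.sqrt ((m : ℝ) + z) := Real.sqrt_pos.mpr hmz
    have hle : Real.sqrt n ≤ Real.sqrt ((m : ℝ) + z) := Real.sqrt_le_sqrt (by linarith)
    have hts : σ / Real.sqrt ((m : ℝ) + z) ≤ σ / Real.sqrt n :=
      div_le_div_of_nonneg_left hσ.le hsn hle
    have htpos : 0 < σ / Real.sqrt ((m : ℝ) + z) := div_pos hσ hsmz
    have hs2 : (σ / Real.sqrt n) ^ 2 = σ ^ 2 / n := by
      rw [div_pow, Real.sq_sqrt hn.le]
    have hterm2 : (σ / Real.sqrt n - σ / Real.sqrt ((m : ℝ) + z)) ^ 2 ≤ σ ^ 2 / n := by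
      nlinarith
    linarith
  linarith
end

section
/- Let n, z, σ > 0, ȳ, μ₀ ∈ ℝ, and for m ≥ n define μ_{n,m} = (n/m)ȳ + (1 - n/m)μ₀ and μ_n = (n/(n+z))ȳ + (z/(n+z))μ₀. Define W₂(m) = (μ_n - μ_{n,m})² + (σ/√m - σ/√(n+z))² and W̃₂(m) = (ȳ - μ_{n,m+z})² + (σ/√n - σ/√(m+z))². Then W₂(n+z) = 0, and W̃₂(m) > 0 for all m ≥ n; hence the minimum over both families is attained uniquely by W₂ at m = n+z. -/
open Real

/-! At `m = n + z` the prior weight `1 - n/(n+z)` equals `z/(n+z)`, so both components of `W₂`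
vanish. Everywhere else some standard-deviation term `σ/√a - σ/√b` has `a ≠ b` and is nonzero,
since `x ↦ σ/√x` is injective on `[0, ∞)`; for `W̃₂` this is `a = n < m + z = b`. -/

lemma div_sqrt_injOn {σ : ℝ} (hσ : σ ≠ 0) : Set.InjOn (fun x => σ / √x) (Set.Ici 0) := by
  intro a ha b hb hab
  have hinv : (√a)⁻¹ = (√b)⁻¹ := mul_left_cancel₀ hσ hab
  exact (sqrt_inj ha hb).mp (inv_inj.mp hinv)

lemma div_sqrt_sub_div_sqrt_ne_zero {σ a b : ℝ} (hσ : σ ≠ 0) (ha : 0 ≤ a) (hb : 0 ≤ b)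
    (hab : a ≠ b) : σ / √a - σ / √b ≠ 0 :=
  sub_ne_zero.mpr fun h => hab (div_sqrt_injOn hσ ha hb h)

lemma weighted_mean_eq_of_add {n z : ℝ} (h : n + z ≠ 0) (ybar μ₀ : ℝ) :
    n / (n + z) * ybar + (1 - n / (n + z)) * μ₀ = n / (n + z) * ybar + z / (n + z) * μ₀ := by
  rw [one_sub_div h, add_sub_cancel_left]

/-- prior sampling: with `μ_{n,m} = (n/m)ȳ + (1-n/m)μ₀`,
`μ_n = (n/(n+z))ȳ + (z/(n+z))μ₀`,
`W₂(m) = (μ_n - μ_{n,m})² + (σ/√m - σ/√(n+z))²` and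
`W̃₂(m) = (ȳ - μ_{n,m+z})² + (σ/√n - σ/√(m+z))²`, we have `W₂(n+z) = 0`,
`W̃₂(m) > 0` for all `m ≥ n`, and `W₂(m) > 0` for all `m ≥ n` with `m ≠ n+z`;
hence the minimum over both families is attained uniquely by `W₂` at `m = n+z`. -/
theorem stmt_7 (n z σ ybar μ₀ : ℝ) (hn : 0 < n) (hz : 0 < z) (hσ : 0 < σ)
    (μnm : ℝ → ℝ) (hμnm : ∀ m, μnm m = (n / m) * ybar + (1 - n / m) * μ₀)
    (μn : ℝ) (hμn : μn = (n / (n + z)) * ybar + (z / (n + z)) * μ₀)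
    (W Wt : ℝ → ℝ)
    (hW : ∀ m, W m = (μn - μnm m) ^ 2 + (σ / Real.sqrt m - σ / Real.sqrt (n + z)) ^ 2)
    (hWt : ∀ m, Wt m = (ybar - μnm (m + z)) ^ 2
      + (σ / Real.sqrt n - σ / Real.sqrt (m + z)) ^ 2) :
    W (n + z) = 0 ∧ (∀ m, n ≤ m → 0 < Wt m) ∧ (∀ m, n ≤ m → m ≠ n + z → 0 < W m) := by
  have hnz : 0 < n + z := by linarith
  refine ⟨?_, fun m hm => ?_, fun m hm hne => ?_⟩
  · rw [hW, hμnm, hμn, weighted_mean_eq_of_add hnz.ne']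
    simp
  · have hsd := div_sqrt_sub_div_sqrt_ne_zero hσ.ne' hn.le (by linarith)
      (show n < m + z by linarith).ne
    rw [hWt]
    positivity
  · have hsd := div_sqrt_sub_div_sqrt_ne_zero hσ.ne' (hn.le.trans hm) hnz.le hne
    rw [hW]
    positivity
end

section
/- In the Gaussian conjugate model, conditional on ȳ_n and μ, the squared Wasserstein distance W₂(π_m^f, π_n^c) is distributed as τ_m·χ²₁(λ_m/τ_m) + c_m², where c_m² = (σ/√(n+z) - σ/√m)², τ_m = (r/m²)σ², r = m - n, and λ_m = ((z/(n+z) - r/m)(ȳ_n - μ) + (1 - w_n)(μ - μ₀))², with w_n = n/(n+z). -/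
/-!
Conditionally on `ȳ_n` and `μ`, the only randomness is `s̄_r ~ N(μ, σ²/r)`, and
`μ_n - (n/m)ȳ_n - (r/m)s̄_r` is an affine image of it, hence Gaussian with variance
`(r/m)² σ²/r = τ_m` and mean `a = -((z/(n+z) - r/m)(ȳ_n - μ) + (1 - w_n)(μ - μ₀))`.
Writing a `N(a, τ)` variable as `√τ Z` with `Z ~ N(a/√τ, 1)` turns its square into
`τ Z²`, and since squaring is even only `|a| = √(a²)` matters, i.e. `Z ~ N(√(λ_m/τ_m), 1)`.
-/

open MeasureTheory ProbabilityTheory NNReal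

lemma gaussianReal_map_comp_const_sub_mul {f : ℝ → ℝ} (hf : Measurable f) (μ : ℝ) (v : ℝ≥0)
    (b c : ℝ) :
    (gaussianReal μ v).map (fun x ↦ f (b - c * x))
      = (gaussianReal (b - c * μ) (.mk (c ^ 2) (sq_nonneg c) * v)).map f := by
  have hcomp : (fun x ↦ f (b - c * x)) = f ∘ (b - ·) ∘ (c * ·) := rfl
  rw [hcomp, ← Measure.map_map hf (by fun_prop), ← Measure.map_map (by fun_prop) (by fun_prop),
    gaussianReal_map_const_mul, gaussianReal_map_const_sub]

lemma gaussianReal_neg_map_of_even {f : ℝ → ℝ} (hf : Measurable f) (hf_even : ∀ x, f (-x) = f x)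
    (μ : ℝ) (v : ℝ≥0) :
    (gaussianReal (-μ) v).map f = (gaussianReal μ v).map f := by
  rw [← gaussianReal_map_neg, Measure.map_map hf (by fun_prop)]
  exact congrArg (Measure.map · _) (funext hf_even)

lemma gaussianReal_abs_map_of_even {f : ℝ → ℝ} (hf : Measurable f) (hf_even : ∀ x, f (-x) = f x)
    (μ : ℝ) (v : ℝ≥0) :
    (gaussianReal |μ| v).map f = (gaussianReal μ v).map f := by
  rcases abs_choice μ with h | h <;> rw [h]
  exact gaussianReal_neg_map_of_even hf hf_even μ v

lemma gaussianReal_map_sq_add_eq_scaled {τ : ℝ} (hτ : 0 < τ) (a c : ℝ) :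
    (gaussianReal (√(a ^ 2 / τ)) 1).map (fun t ↦ τ * t ^ 2 + c)
      = (gaussianReal a τ.toNNReal).map (fun x ↦ x ^ 2 + c) := by
  have hscale : (fun t ↦ τ * t ^ 2 + c) = (fun x ↦ x ^ 2 + c) ∘ (√τ * ·) := by
    ext t
    simp only [Function.comp_apply, mul_pow, Real.sq_sqrt hτ.le]
  have hvar : (.mk (√τ ^ 2) (sq_nonneg _) * 1 : ℝ≥0) = τ.toNNReal := by
    ext
    simp [Real.sq_sqrt hτ.le, hτ.le]
  have hmean : √τ * √(a ^ 2 / τ) = |a| := by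
    rw [← Real.sqrt_mul hτ.le, mul_div_cancel₀ _ hτ.ne', Real.sqrt_sq_eq_abs]
  rw [hscale, ← Measure.map_map (by fun_prop) (by fun_prop), gaussianReal_map_const_mul, hvar,
    hmean, gaussianReal_abs_map_of_even (by fun_prop) (fun x ↦ by ring)]

lemma conjugate_posterior_mean_sub_expanded_mean {n r z : ℝ} (hnz : n + z ≠ 0) (hm : n + r ≠ 0)
    (ybar μ μ₀ : ℝ) :
    n / (n + z) * ybar + (1 - n / (n + z)) * μ₀ - n / (n + r) * ybar - r / (n + r) * μ
      = -((z / (n + z) - r / (n + r)) * (ybar - μ) + (1 - n / (n + z)) * (μ - μ₀)) := by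
  field_simp
  ring

theorem stmt_8_general (n r z σ μ ybar μ₀ : ℝ) (hn : 0 < n) (hr : 0 < r) (hz : 0 < z)
    (hσ : 0 < σ)
    (m : ℝ) (hm : m = n + r)
    (wn : ℝ) (hwn : wn = n / (n + z))
    (μn : ℝ) (hμn : μn = wn * ybar + (1 - wn) * μ₀)
    (cm2 : ℝ)
    (τm : ℝ) (hτm : τm = (r / m ^ 2) * σ ^ 2)
    (lamm : ℝ)
    (hlamm : lamm = ((z / (n + z) - r / m) * (ybar - μ) + (1 - wn) * (μ - μ₀)) ^ 2) :
    (gaussianReal μ (Real.toNNReal (σ ^ 2 / r))).map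
        (fun s : ℝ => (μn - (n / m) * ybar - (r / m) * s) ^ 2 + cm2)
      = (gaussianReal (Real.sqrt (lamm / τm)) 1).map
        (fun t : ℝ => τm * t ^ 2 + cm2) := by
  have hm0 : 0 < m := by linarith
  have hτ : 0 < τm := by rw [hτm]; positivity
  have hvar : (.mk ((r / m) ^ 2) (sq_nonneg _) * (σ ^ 2 / r).toNNReal : ℝ≥0) = τm.toNNReal := by
    ext
    rw [NNReal.coe_mul, NNReal.coe_mk, Real.coe_toNNReal _ hτ.le,
      Real.coe_toNNReal _ (by positivity), hτm]
    field_simp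
  have hmean : (μn - n / m * ybar - r / m * μ) ^ 2 = lamm := by
    rw [hμn, hwn, hm, conjugate_posterior_mean_sub_expanded_mean (by linarith) (by linarith),
      neg_sq, hlamm, hwn, hm]
  calc (gaussianReal μ (σ ^ 2 / r).toNNReal).map (fun s ↦ (μn - n / m * ybar - r / m * s) ^ 2 + cm2)
      = (gaussianReal (μn - n / m * ybar - r / m * μ) τm.toNNReal).map (fun x ↦ x ^ 2 + cm2) := by
        rw [gaussianReal_map_comp_const_sub_mul (f := fun x ↦ x ^ 2 + cm2) (by fun_prop), hvar]
    _ = (gaussianReal √(lamm / τm) 1).map (fun t ↦ τm * t ^ 2 + cm2) := by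
        rw [← hmean, gaussianReal_map_sq_add_eq_scaled hτ]

/-- Lemma 2, first part: conditional on `ȳ_n` and `μ`, the squared
Wasserstein distance `W₂²(π_m^f, π_n^c) = (μ_n - (n/m)ȳ_n - (r/m)s̄_r)² + c_m²`
(with `s̄_r ~ N(μ, σ²/r)`) is distributed as `τ_m · χ²₁(λ_m/τ_m) + c_m²`, where
`c_m² = (σ/√(n+z) - σ/√m)²`, `τ_m = (r/m²)σ²`, `r = m - n`,
`λ_m = ((z/(n+z) - r/m)(ȳ_n - μ) + (1-w_n)(μ - μ₀))²`, `w_n = n/(n+z)`.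
Here the noncentral `χ²₁(δ)` variable is realized as `Z²` with `Z ~ N(√δ, 1)`. -/
theorem stmt_8 (n r z σ μ ybar μ₀ : ℝ) (hn : 0 < n) (hr : 0 < r) (hz : 0 < z)
    (hσ : 0 < σ)
    (m : ℝ) (hm : m = n + r)
    (wn : ℝ) (hwn : wn = n / (n + z))
    (μn : ℝ) (hμn : μn = wn * ybar + (1 - wn) * μ₀)
    (cm2 : ℝ) (hcm2 : cm2 = (σ / Real.sqrt (n + z) - σ / Real.sqrt m) ^ 2)
    (τm : ℝ) (hτm : τm = (r / m ^ 2) * σ ^ 2)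
    (lamm : ℝ)
    (hlamm : lamm = ((z / (n + z) - r / m) * (ybar - μ) + (1 - wn) * (μ - μ₀)) ^ 2) :
    (gaussianReal μ (Real.toNNReal (σ ^ 2 / r))).map
        (fun s : ℝ => (μn - (n / m) * ybar - (r / m) * s) ^ 2 + cm2)
      = (gaussianReal (Real.sqrt (lamm / τm)) 1).map
        (fun t : ℝ => τm * t ^ 2 + cm2) :=
  stmt_8_general n r z σ μ ybar μ₀ hn hr hz hσ m hm wn hwn μn hμn cm2 τm hτm lamm hlamm
end

section
/- For all reals m ≥ n > 0 and z > 0: (σ/√n - σ/√(m+z))² ≥ (σ/√(n+z) - σ/√m)² with equality iff m = n, and for n < m ≤ n+z the left side is strictly increasing in m while the right side is strictly decreasing in m. -/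
open Real

/-- for `m ≥ n > 0`, `z > 0`, `σ > 0`:
`(σ/√n - σ/√(m+z))² ≥ (σ/√(n+z) - σ/√m)²` with equality iff `m = n`; moreover on
`n < m ≤ n+z` the left-hand side is strictly increasing in `m` and the right-hand
side is strictly decreasing in `m`. -/
theorem stmt_10 (n z σ : ℝ) (hn : 0 < n) (hz : 0 < z) (hσ : 0 < σ) :
    (∀ m, n ≤ m →
      (σ / Real.sqrt (n + z) - σ / Real.sqrt m) ^ 2
        ≤ (σ / Real.sqrt n - σ / Real.sqrt (m + z)) ^ 2) ∧
    (∀ m, n ≤ m →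
      ((σ / Real.sqrt n - σ / Real.sqrt (m + z)) ^ 2
          = (σ / Real.sqrt (n + z) - σ / Real.sqrt m) ^ 2 ↔ m = n)) ∧
    StrictMonoOn (fun m => (σ / Real.sqrt n - σ / Real.sqrt (m + z)) ^ 2)
      (Set.Ioc n (n + z)) ∧
    StrictAntiOn (fun m => (σ / Real.sqrt (n + z) - σ / Real.sqrt m) ^ 2)
      (Set.Ioc n (n + z)) := by
  have key : ∀ x y : ℝ, 0 < x → x < y → σ / Real.sqrt y < σ / Real.sqrt x := by
    intro x y hx hxy
    have hsx : 0 < Real.sqrt x := Real.sqrt_pos.2 hx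
    have hsy : Real.sqrt x < Real.sqrt y := Real.sqrt_lt_sqrt hx.le hxy
    exact div_lt_div_of_pos_left hσ hsx hsy
  have key_le : ∀ x y : ℝ, 0 < x → x ≤ y → σ / Real.sqrt y ≤ σ / Real.sqrt x := by
    intro x y hx hxy
    rcases eq_or_lt_of_le hxy with rfl | h
    · exact le_refl _
    · exact (key x y hx h).le
  refine ⟨?_, ?_, ?_, ?_⟩
  · intro m hm
    have hm0 : 0 < m := hn.trans_le hm
    have h2 := key n (n + z) hn (by linarith)
    have h3 := key m (m + z) hm0 (by linarith)
    have h4 := key_le n m hn hm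
    have h5 := key_le (n + z) (m + z) (by linarith) (by linarith)
    nlinarith [mul_nonneg (by linarith : (0:ℝ) ≤ (σ / Real.sqrt n - σ / Real.sqrt (m + z)) - (σ / Real.sqrt (n + z) - σ / Real.sqrt m)) (by linarith : (0:ℝ) ≤ (σ / Real.sqrt n - σ / Real.sqrt (m + z)) + (σ / Real.sqrt (n + z) - σ / Real.sqrt m))]
  · intro m hm
    constructor
    · intro heq
      by_contra hne
      have hlt : n < m := lt_of_le_of_ne hm (Ne.symm hne)
      have h2 := key n (n + z) hn (by linarith)
      have h3 := key_le m (m + z) (hn.trans hlt) (by linarith)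
      have h4 := key n m hn hlt
      have h5 := key (n + z) (m + z) (by linarith) (by linarith)
      nlinarith [heq]
    · rintro rfl
      ring
  · intro m₁ hm₁ m₂ hm₂ h12
    obtain ⟨h1a, h1b⟩ := hm₁
    obtain ⟨h2a, h2b⟩ := hm₂
    have hu₁ : σ / Real.sqrt (m₁ + z) < σ / Real.sqrt n := key n (m₁ + z) hn (by linarith)
    have hu₂ : σ / Real.sqrt (m₂ + z) < σ / Real.sqrt (m₁ + z) :=
      key (m₁ + z) (m₂ + z) (by linarith) (by linarith)
    have := pow_lt_pow_left₀ (by linarith : σ / Real.sqrt n - σ / Real.sqrt (m₁ + z) < σ / Real.sqrt n - σ / Real.sqrt (m₂ + z)) (by linarith) (two_ne_zero)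
    simpa using this
  · intro m₁ hm₁ m₂ hm₂ h12
    obtain ⟨h1a, h1b⟩ := hm₁
    obtain ⟨h2a, h2b⟩ := hm₂
    have hv₁ : σ / Real.sqrt (n + z) ≤ σ / Real.sqrt m₁ := key_le m₁ (n + z) (hn.trans h1a) h1b
    have hv₂ : σ / Real.sqrt m₂ < σ / Real.sqrt m₁ := key m₁ m₂ (hn.trans h1a) h12
    have hv₀ : σ / Real.sqrt (n + z) ≤ σ / Real.sqrt m₂ := key_le m₂ (n + z) (hn.trans h2a) h2b
    have h := pow_lt_pow_left₀ (by linarith : σ / Real.sqrt m₂ - σ / Real.sqrt (n + z) < σ / Real.sqrt m₁ - σ / Real.sqrt (n + z)) (by linarith) (two_ne_zero)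
    simp only []
    nlinarith [h]
end

section
/- Suppose x₁,…,x_m are i.i.d. samples with mean ȳ_n and variance S_n² (sampling with replacement from observations with sample mean ȳ_n and variance S_n²). Then E[D_{m,n}] = (1-w_n)²(ȳ_n - μ₀)² + S_n²/m, where D_{m,n} = (w_n ȳ_n + (1-w_n)μ₀ - x̄_m)², and consequently the function m ↦ E[KL(π_n^c, π_m^f)] = (1/2){ m/(n+z) + (m/σ²)E[D_{m,n}] - 1 + log((n+z)/m) } (with S_n² replaced by σ² in the KL) has derivative (1/2){ 1/(n+z) + (1-w_n)²(ȳ_n-μ₀)²/σ² - 1/m }, so it is minimized over m > 0 at m* = [1/(n+z) + (1-w_n)²(ȳ_n - μ₀)²/σ²]^{-1}. -/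
/-!
The first part is the bias–variance decomposition `E[(c - X)²] = Var X + (c - E X)²`.
For `m > 0` the expected KL equals `½ (a m - log m) + const` with
`a = 1/(n+z) + (1-w_n)²(ȳ_n-μ₀)²/σ²`, and `log t ≤ t - 1` at `t = a m` shows that
`a m - log m` is minimal at `m = a⁻¹`.
-/

open MeasureTheory ProbabilityTheory Real Set

theorem integral_const_sub_sq_eq_variance_add {Ω : Type*} [MeasurableSpace Ω] {μ : Measure Ω}
    [IsProbabilityMeasure μ] {X : Ω → ℝ} (hX : MemLp X 2 μ) (c : ℝ) :
    ∫ ω, (c - X ω) ^ 2 ∂μ = Var[X; μ] + (c - μ[X]) ^ 2 := by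
  have hcX : MemLp (fun ω ↦ c - X ω) 2 μ := (memLp_const c).sub hX
  have hmean : μ[fun ω ↦ c - X ω] = c - μ[X] := by
    rw [integral_sub (integrable_const c) (hX.integrable one_le_two), integral_const]
    simp
  rw [← variance_const_sub hX.aestronglyMeasurable c, variance_eq_sub hcX, hmean]
  simp only [Pi.pow_apply]
  ring

theorem hasDerivAt_mul_sub_log (a : ℝ) {x : ℝ} (hx : x ≠ 0) :
    HasDerivAt (fun x ↦ a * x - log x) (a - x⁻¹) x := by
  simpa using ((hasDerivAt_id' x).const_mul a).fun_sub (hasDerivAt_log hx)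

theorem isMinOn_mul_sub_log {a : ℝ} (ha : 0 < a) :
    IsMinOn (fun x ↦ a * x - log x) (Ioi 0) a⁻¹ := by
  refine isMinOn_iff.2 fun x (hx : 0 < x) ↦ ?_
  have hlog : log (a * x) ≤ a * x - 1 := log_le_sub_one_of_pos (mul_pos ha hx)
  rw [log_mul ha.ne' hx.ne'] at hlog
  rw [mul_inv_cancel₀ ha.ne', log_inv]
  linarith

theorem stmt_12_general (n z σ Sn ybar μ₀ : ℝ) (hn : 0 < n) (hz : 0 < z)
    (wn : ℝ)
    (F : ℝ → ℝ)
    (hF : ∀ m, F m = (1 / 2) * (m / (n + z)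
      + (m / σ ^ 2) * ((1 - wn) ^ 2 * (ybar - μ₀) ^ 2 + Sn ^ 2 / m) - 1
      + Real.log ((n + z) / m))) :
    (∀ {Ω : Type} [MeasurableSpace Ω] (P : Measure Ω) [IsProbabilityMeasure P]
        (X : Ω → ℝ) (m : ℝ), 0 < m →
      Integrable X P → Integrable (fun ω => (X ω) ^ 2) P →
      (∫ ω, X ω ∂P) = ybar → (∫ ω, (X ω - ybar) ^ 2 ∂P) = Sn ^ 2 / m →
      (∫ ω, (wn * ybar + (1 - wn) * μ₀ - X ω) ^ 2 ∂P)
        = (1 - wn) ^ 2 * (ybar - μ₀) ^ 2 + Sn ^ 2 / m) ∧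
    (∀ m, 0 < m → HasDerivAt F
      ((1 / 2) * (1 / (n + z) + (1 - wn) ^ 2 * (ybar - μ₀) ^ 2 / σ ^ 2 - 1 / m)) m) ∧
    (∀ m, 0 < m →
      F ((1 / (n + z) + (1 - wn) ^ 2 * (ybar - μ₀) ^ 2 / σ ^ 2)⁻¹) ≤ F m) := by
  have hnz : 0 < n + z := add_pos hn hz
  set a := 1 / (n + z) + (1 - wn) ^ 2 * (ybar - μ₀) ^ 2 / σ ^ 2 with ha_def
  have ha : 0 < a := by positivity
  have hF_eq : ∀ m ≠ 0,
      F m = (1 / 2) * ((a * m - log m) + (Sn ^ 2 / σ ^ 2 - 1 + log (n + z))) := by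
    intro m hm
    rw [hF, log_div hnz.ne' hm, ha_def]
    field_simp
    ring
  refine ⟨?_, fun m hm ↦ ?_, fun m hm ↦ ?_⟩
  · intro Ω _ P _ X m _ hX hX2 hmean hvar
    have hX2' : MemLp X 2 P := (memLp_two_iff_integrable_sq hX.aestronglyMeasurable).2 hX2
    rw [integral_const_sub_sq_eq_variance_add hX2', variance_eq_integral hX.aemeasurable, hmean,
      hvar]
    ring
  · have hderiv := ((hasDerivAt_mul_sub_log a hm.ne').add_const
      (Sn ^ 2 / σ ^ 2 - 1 + log (n + z))).const_mul (1 / 2 : ℝ)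
    rw [one_div m]
    refine hderiv.congr_of_eventuallyEq ?_
    filter_upwards [eventually_ne_nhds hm.ne'] with x hx using hF_eq x hx
  · rw [hF_eq _ (inv_pos.2 ha).ne', hF_eq _ hm.ne']
    have hmin := isMinOn_iff.1 (isMinOn_mul_sub_log ha) m hm
    linarith

/-- bootstrap hypothetical sampling: if the hypothetical sample mean
`x̄_m` has mean `ȳ_n` and variance `S_n²/m`, then
`E[D_{m,n}] = (1-w_n)²(ȳ_n - μ₀)² + S_n²/m` where
`D_{m,n} = (w_n ȳ_n + (1-w_n)μ₀ - x̄_m)²`; consequently the function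
`F(m) = (1/2){ m/(n+z) + (m/σ²)[(1-w_n)²(ȳ_n-μ₀)² + S_n²/m] - 1 + log((n+z)/m) }`
has derivative `(1/2){1/(n+z) + (1-w_n)²(ȳ_n-μ₀)²/σ² - 1/m}` at each `m > 0` and is
minimized over `m > 0` at `m* = [1/(n+z) + (1-w_n)²(ȳ_n-μ₀)²/σ²]⁻¹`. -/
theorem stmt_12 (n z σ Sn ybar μ₀ : ℝ) (hn : 0 < n) (hz : 0 < z) (hσ : 0 < σ)
    (hSn : 0 < Sn)
    (wn : ℝ) (hwn : wn = n / (n + z))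
    (F : ℝ → ℝ)
    (hF : ∀ m, F m = (1 / 2) * (m / (n + z)
      + (m / σ ^ 2) * ((1 - wn) ^ 2 * (ybar - μ₀) ^ 2 + Sn ^ 2 / m) - 1
      + Real.log ((n + z) / m))) :
    (∀ {Ω : Type} [MeasurableSpace Ω] (P : Measure Ω) [IsProbabilityMeasure P]
        (X : Ω → ℝ) (m : ℝ), 0 < m →
      Integrable X P → Integrable (fun ω => (X ω) ^ 2) P →
      (∫ ω, X ω ∂P) = ybar → (∫ ω, (X ω - ybar) ^ 2 ∂P) = Sn ^ 2 / m →
      (∫ ω, (wn * ybar + (1 - wn) * μ₀ - X ω) ^ 2 ∂P)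
        = (1 - wn) ^ 2 * (ybar - μ₀) ^ 2 + Sn ^ 2 / m) ∧
    (∀ m, 0 < m → HasDerivAt F
      ((1 / 2) * (1 / (n + z) + (1 - wn) ^ 2 * (ybar - μ₀) ^ 2 / σ ^ 2 - 1 / m)) m) ∧
    (∀ m, 0 < m →
      F ((1 / (n + z) + (1 - wn) ^ 2 * (ybar - μ₀) ^ 2 / σ ^ 2)⁻¹) ≤ F m) :=
  stmt_12_general n z σ Sn ybar μ₀ hn hz wn F hF
end

section
/- The minimizer m* = (n+z)[1 + z²(ȳ_n - μ₀)²/((n+z)σ²)]^{-1} of the expected KL divergence satisfies: m* < n if and only if (ȳ_n - μ₀)² > σ²(1/n + 1/z), and m* > n if and only if (ȳ_n - μ₀)² < σ²(1/n + 1/z). -/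
/-- the minimizer `m* = (n+z)[1 + z²(ȳ_n-μ₀)²/((n+z)σ²)]⁻¹` of the
expected KL divergence satisfies `m* < n ↔ (ȳ_n-μ₀)² > σ²(1/n + 1/z)` and
`m* > n ↔ (ȳ_n-μ₀)² < σ²(1/n + 1/z)`. -/
theorem stmt_13 (n z σ ybar μ₀ : ℝ) (hn : 0 < n) (hz : 0 < z) (hσ : 0 < σ)
    (mstar : ℝ)
    (hmstar : mstar = (n + z) * (1 + z ^ 2 * (ybar - μ₀) ^ 2 / ((n + z) * σ ^ 2))⁻¹) :
    (mstar < n ↔ (ybar - μ₀) ^ 2 > σ ^ 2 * (1 / n + 1 / z)) ∧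
    (mstar > n ↔ (ybar - μ₀) ^ 2 < σ ^ 2 * (1 / n + 1 / z)) := by
  subst hmstar
  have hnz : (0:ℝ) < n + z := by linarith
  have hs : (0:ℝ) < (n + z) * σ ^ 2 := by positivity
  have hden : (0:ℝ) < 1 + z ^ 2 * (ybar - μ₀) ^ 2 / ((n + z) * σ ^ 2) := by positivity
  have hEe : z ^ 2 * (ybar - μ₀) ^ 2 / ((n + z) * σ ^ 2) * ((n + z) * σ ^ 2)
      = z ^ 2 * (ybar - μ₀) ^ 2 := div_mul_cancel₀ _ (ne_of_gt hs)
  have hR : σ ^ 2 * (1 / n + 1 / z) = σ ^ 2 * (n + z) / (n * z) := by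
    field_simp; ring
  have hnz' : (0:ℝ) < n * z := by positivity
  rw [← div_eq_mul_inv, div_lt_iff₀ hden]
  constructor
  · rw [gt_iff_lt, hR, div_lt_iff₀ hnz']
    constructor
    · intro h; nlinarith [hEe, hs, hden]
    · intro h; nlinarith [hEe, hs, hden]
  · rw [gt_iff_lt, lt_div_iff₀ hden, hR, lt_div_iff₀ hnz']
    constructor
    · intro h; nlinarith [hEe, hs, hden]
    · intro h; nlinarith [hEe, hs, hden]
end

section
/- If hypothetical samples x_i are i.i.d. draws from the conjugate posterior predictive distribution (i.e., E[x̄_m] = μ_n = w_n ȳ_n + (1-w_n)μ₀ and Var(x̄_m) = (σ² + σ²/(n+z))/m), then the expected KL divergence E[KL(π_n^c, π_m^f)] = (1/2){ m/(n+z) + (m/σ²)E[D_{m,n}] - 1 + log((n+z)/m) } has derivative in m equal to (1/2){1/(n+z) - 1/m} and is minimized at m = n + z. -/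
open Real

/-! For `m ≠ 0` the middle term `(m/σ²)·E[D_{m,n}]` does not depend on `m`, so up to an additive
constant the expected KL divergence is `(1/2)(m/c + log (c/m))` with `c = n + z`. Its derivative is
`(1/2)(1/c - 1/m)`, and `log x ≥ 1 - 1/x` at `x = c/m` shows that it is smallest at `m = c`. -/

namespace Real

theorem hasDerivAt_div_add_log_div {c m : ℝ} (hc : c ≠ 0) (hm : m ≠ 0) :
    HasDerivAt (fun x => x / c + log (c / x)) (1 / c - 1 / m) m := by
  have hlog : HasDerivAt (fun x => log (c / x)) (c * -(m ^ 2)⁻¹ / (c / m)) m :=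
    ((hasDerivAt_inv hm).const_mul c).log (div_ne_zero hc hm)
  have hlin : HasDerivAt (fun x => x / c) (1 / c) m := (hasDerivAt_id' m).div_const c
  refine (hlin.add hlog).congr_deriv ?_
  field_simp
  ring

theorem one_le_div_add_log_div {c m : ℝ} (hc : 0 < c) (hm : 0 < m) :
    1 ≤ m / c + log (c / m) := by
  have h := one_sub_inv_le_log_of_pos (div_pos hc hm)
  rw [inv_div] at h
  linarith

end Real

theorem stmt_14_general (n z σ : ℝ) (hn : 0 < n) (hz : 0 < z)
    (F : ℝ → ℝ)
    (hF : ∀ m, F m = (1 / 2) * (m / (n + z)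
      + (m / σ ^ 2) * ((σ ^ 2 + σ ^ 2 / (n + z)) / m) - 1 + Real.log ((n + z) / m))) :
    (∀ m, 0 < m → HasDerivAt F ((1 / 2) * (1 / (n + z) - 1 / m)) m) ∧
    (∀ m, 0 < m → F (n + z) ≤ F m) := by
  set c := n + z
  have hc : 0 < c := add_pos hn hz
  set K := (σ ^ 2 + σ ^ 2 / c) / σ ^ 2
  have hF_eq : ∀ m, m ≠ 0 → F m = (1 / 2) * (m / c + log (c / m)) + (1 / 2) * (K - 1) := by
    intro m hm
    rw [hF m, div_mul_div_cancel₀' hm]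
    ring
  constructor
  · intro m hm
    have hG := ((hasDerivAt_div_add_log_div hc.ne' hm.ne').const_mul (1 / 2)).add_const
      ((1 / 2) * (K - 1))
    refine hG.congr_of_eventuallyEq ?_
    filter_upwards [eventually_ne_nhds hm.ne'] with x hx
    exact hF_eq x hx
  · intro m hm
    have hmin := one_le_div_add_log_div hc hm
    rw [hF_eq m hm.ne', hF_eq c hc.ne', div_self hc.ne', log_one]
    linarith

/-- posterior predictive hypothetical sampling: with
`E[D_{m,n}] = (σ² + σ²/(n+z))/m`, the expected KL divergence
`F(m) = (1/2){ m/(n+z) + (m/σ²)·E[D_{m,n}] - 1 + log((n+z)/m) }` has derivative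
`(1/2){1/(n+z) - 1/m}` at each `m > 0` and is minimized over `m > 0` at `m = n+z`. -/
theorem stmt_14 (n z σ : ℝ) (hn : 0 < n) (hz : 0 < z) (hσ : 0 < σ)
    (F : ℝ → ℝ)
    (hF : ∀ m, F m = (1 / 2) * (m / (n + z)
      + (m / σ ^ 2) * ((σ ^ 2 + σ ^ 2 / (n + z)) / m) - 1 + Real.log ((n + z) / m))) :
    (∀ m, 0 < m → HasDerivAt F ((1 / 2) * (1 / (n + z) - 1 / m)) m) ∧
    (∀ m, 0 < m → F (n + z) ≤ F m) :=
  stmt_14_general n z σ hn hz F hF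
end

section
/- For the Gaussian conjugate model, KL(π_n^c, π_m^f) / W₂²(π_m^f, π_n^c) ≥ m/(2σ²), with equality if and only if m = n + z. -/
/-!
Writing `c = m / (2σ²)`, the mean terms of `KL` and `c · W₂²` coincide, and with `x = m / (n + z)`
the remaining difference is `KL - c · W₂² = (2 (√x - 1) - log x) / 2`. Since `log √x ≤ √x - 1`
with equality only at `√x = 1`, this gap is nonnegative and vanishes exactly when `m = n + z`.
-/

open Real

namespace Real

theorem log_le_two_mul_sqrt_sub_one {x : ℝ} (hx : 0 < x) : log x ≤ 2 * (√x - 1) := by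
  have h := log_le_sub_one_of_pos (sqrt_pos.mpr hx)
  rw [log_sqrt hx.le] at h
  linarith

theorem log_eq_two_mul_sqrt_sub_one_iff {x : ℝ} (hx : 0 < x) :
    log x = 2 * (√x - 1) ↔ x = 1 := by
  refine ⟨fun h ↦ ?_, fun h ↦ by simp [h]⟩
  by_contra hx1
  have h' := log_lt_sub_one_of_pos (sqrt_pos.mpr hx) (mt sqrt_eq_one.mp hx1)
  rw [log_sqrt hx.le] at h'
  linarith

end Real

theorem gaussian_kl_sub_mul_w2_sq {a b σ d : ℝ} (ha : 0 < a) (hb : 0 < b) (hσ : σ ≠ 0) :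
    (1 / 2) * (a / b + (a / σ ^ 2) * d ^ 2 - 1 + log (b / a))
      - a / (2 * σ ^ 2) * (d ^ 2 + (σ / √a - σ / √b) ^ 2)
      = (2 * (√(a / b) - 1) - log (a / b)) / 2 := by
  rw [sqrt_div ha.le, ← inv_div b a, log_inv]
  generalize log (b / a) = L
  have hsa : √a ^ 2 = a := sq_sqrt ha.le
  have hsb : √b ^ 2 = b := sq_sqrt hb.le
  have hsa0 : 0 < √a := sqrt_pos.mpr ha
  have hsb0 : 0 < √b := sqrt_pos.mpr hb
  generalize √a = s at *
  generalize √b = t at *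
  subst hsa hsb
  field_simp
  ring

theorem gaussian_w2_sq_pos {a b σ d : ℝ} (ha : 0 ≤ a) (hb : 0 ≤ b) (hσ : σ ≠ 0)
    (h : d ≠ 0 ∨ a ≠ b) : 0 < d ^ 2 + (σ / √a - σ / √b) ^ 2 := by
  rcases h with hd | hab
  · positivity
  · have : σ / √a - σ / √b ≠ 0 := by
      rw [sub_ne_zero, div_eq_mul_inv, div_eq_mul_inv, ne_eq, mul_right_inj' hσ, inv_inj,
        sqrt_inj ha hb]
      exact hab
    positivity

/-- in the Gaussian conjugate model, with
`KL = (1/2)[m/(n+z) + (m/σ²)(μ_n - x̄_m)² - 1 + log((n+z)/m)]` and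
`W₂² = (μ_n - x̄_m)² + (σ/√m - σ/√(n+z))²` (assumed positive, i.e. `x̄_m ≠ μ_n` or
`m ≠ n+z`), one has `KL / W₂² ≥ m/(2σ²)`, with equality iff `m = n + z`. -/
theorem stmt_15 (n m z σ μn xbarm : ℝ) (hn : 0 < n) (hm : 0 < m) (hz : 0 < z)
    (hσ : 0 < σ) (hpos : xbarm ≠ μn ∨ m ≠ n + z)
    (KL W : ℝ)
    (hKL : KL = (1 / 2) * (m / (n + z) + (m / σ ^ 2) * (μn - xbarm) ^ 2 - 1
      + Real.log ((n + z) / m)))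
    (hW : W = (μn - xbarm) ^ 2 + (σ / Real.sqrt m - σ / Real.sqrt (n + z)) ^ 2) :
    m / (2 * σ ^ 2) ≤ KL / W ∧ (KL / W = m / (2 * σ ^ 2) ↔ m = n + z) := by
  have hnz : 0 < n + z := add_pos hn hz
  have hx : 0 < m / (n + z) := div_pos hm hnz
  have hW0 : 0 < W := hW ▸ gaussian_w2_sq_pos hm.le hnz.le hσ.ne'
    (hpos.imp_left fun h ↦ sub_ne_zero.mpr h.symm)
  have hgap : KL - m / (2 * σ ^ 2) * W = (2 * (√(m / (n + z)) - 1) - log (m / (n + z))) / 2 := by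
    rw [hKL, hW]
    exact gaussian_kl_sub_mul_w2_sq hm hnz hσ.ne'
  have hle := log_le_two_mul_sqrt_sub_one hx
  refine ⟨by rw [le_div_iff₀ hW0]; linarith, ?_⟩
  rw [div_eq_iff hW0.ne', ← div_eq_one_iff_eq hnz.ne', ← log_eq_two_mul_sqrt_sub_one_iff hx]
  constructor <;> intro h <;> linarith
end
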